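/- Let E^{*,*} be a first-quadrant double complex of R-modules (E^{p,q} = 0 for p < 0 or q < 0), and let C be a cochain complex with C^q = 0 for q < 0, equipped with maps h_q : C^q → E^{0,q} making each row 0 → C^q → E^{0,q} → E^{1,q} → E^{2,q} → ⋯ exact, and such that the composites C^q → E^{0,q} → E^{0,q+1} and C^q → C^{q+1} → E^{0,q+1} agree up to sign. Then the induced map C → Tot⊕(E^{*,*}) is a quasi-isomorphism. -/

import Mathlib

/-- A chain map `f` between (elementwise given) cochain complexes is a quasi-isomorphism. -/
def IsQuasiIso (R : Type) [Ring R] (X Y : ℤ → Type)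
    [∀ q, AddCommGroup (X q)] [∀ q, Module R (X q)]
    [∀ q, AddCommGroup (Y q)] [∀ q, Module R (Y q)]
    (dX : ∀ q, X q →ₗ[R] X (q + 1)) (dY : ∀ q, Y q →ₗ[R] Y (q + 1))
    (f : ∀ q, X q →ₗ[R] Y q) : Prop :=
  (∀ (q : ℤ) (y : Y (q + 1)), dY (q + 1) y = 0 →
      ∃ x : X (q + 1), dX (q + 1) x = 0 ∧ ∃ u : Y q, y - f (q + 1) x = dY q u) ∧
  (∀ (q : ℤ) (x : X (q + 1)), dX (q + 1) x = 0 → (∃ u : Y q, f (q + 1) x = dY q u) →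
      ∃ v : X q, dX q v = x)

/-- Transport along equalities of indices of a doubly indexed family of modules. -/
def castM {R : Type} [Ring R] (D : ℤ → ℤ → Type)
    [∀ p q, AddCommGroup (D p q)] [∀ p q, Module R (D p q)] :
    ∀ {p q p' q' : ℤ}, p = p' → q = q' → (D p q →ₗ[R] D p' q')
  | _, _, _, _, rfl, rfl => LinearMap.id

/-- The differential `d_h + d_v` of the totalisation of a double complex. -/
def totd {R : Type} [Ring R] (D : ℤ → ℤ → Type)
    [∀ p q, AddCommGroup (D p q)] [∀ p q, Module R (D p q)]
    (dh : ∀ p q, D p q →ₗ[R] D (p + 1) q) (dv : ∀ p q, D p q →ₗ[R] D p (q + 1))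
    (n : ℤ) : (∀ p, D p (n - p)) →ₗ[R] (∀ p, D p (n + 1 - p)) :=
  LinearMap.pi fun p =>
    (castM D (by omega : p - 1 + 1 = p) (by omega : n - (p - 1) = n + 1 - p)).comp
        ((dh (p - 1) (n - (p - 1))).comp (LinearMap.proj (p - 1)))
      + (castM D rfl (by omega : n - p + 1 = n + 1 - p)).comp
        ((dv p (n - p)).comp (LinearMap.proj p))

/-! A cochain `y` of `Tot E` whose differential vanishes in the columns `p ≥ 1` can be pushed
into column `0` by a staircase: if `y` vanishes to the right of column `m + 1`, the
`(m + 2)`-component of `d y` is `d_h (y (m + 1))`, so by row exactness `y (m + 1) = d_h z`, and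
subtracting `d z` clears column `m + 1`; the first-quadrant condition makes the staircase finite.
A cochain living in column `0` and killed by `d_h` comes from `C` by exactness at `E^{0,*}`, and
its vertical differential is `± h ∘ d_C`. Applied to a cocycle `y` this gives surjectivity on
cohomology; applied to a primitive `u` of the image of `x : C` it gives a primitive of `x`, hence
injectivity. -/

section Cast

variable {R : Type} [Ring R] {E : ℤ → ℤ → Type} [∀ p q, AddCommGroup (E p q)]
  [∀ p q, Module R (E p q)]

@[simp]
theorem castM_self {p q : ℤ} (hp : p = p) (hq : q = q) (x : E p q) :
    castM (R := R) E hp hq x = x :=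
  rfl

@[simp]
theorem castM_castM {p q p' q' p'' q'' : ℤ} (hp : p = p') (hq : q = q') (hp' : p' = p'')
    (hq' : q' = q'') (x : E p q) :
    castM (R := R) E hp' hq' (castM (R := R) E hp hq x) =
      castM (R := R) E (hp.trans hp') (hq.trans hq') x := by
  subst hp hq hp' hq'
  rfl

theorem castM_injective {p q p' q' : ℤ} (hp : p = p') (hq : q = q') :
    Function.Injective (castM (R := R) E hp hq) := by
  subst hp hq
  exact Function.injective_id

@[simp]
theorem castM_eq_zero_iff {p q p' q' : ℤ} (hp : p = p') (hq : q = q') (x : E p q) :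
    castM (R := R) E hp hq x = 0 ↔ x = 0 :=
  (castM_injective hp hq).eq_iff' (map_zero _)

theorem castM_apply_congr {a b : ℤ → ℤ} (F : ∀ i, E (a i) (b i)) {i j p q : ℤ}
    (hij : i = j) (hp : a i = p) (hq : b i = q) (hp' : a j = p) (hq' : b j = q) :
    castM (R := R) E hp hq (F i) = castM (R := R) E hp' hq' (F j) := by
  subst hij
  rfl

theorem Eh_castM (Eh : ∀ p q, E p q →ₗ[R] E (p + 1) q) {p q p' q' : ℤ} (hp : p = p')
    (hq : q = q') (x : E p q) :
    Eh p' q' (castM (R := R) E hp hq x) = castM (R := R) E (by rw [hp]) hq (Eh p q x) := by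
  subst hp hq
  rfl

theorem Ev_castM (Ev : ∀ p q, E p q →ₗ[R] E p (q + 1)) {p q p' q' : ℤ} (hp : p = p')
    (hq : q = q') (x : E p q) :
    Ev p' q' (castM (R := R) E hp hq x) = castM (R := R) E hp (by rw [hq]) (Ev p q x) := by
  subst hp hq
  rfl

end Cast

section Totalisation

variable {R : Type} [Ring R] {E : ℤ → ℤ → Type} [∀ p q, AddCommGroup (E p q)]
  [∀ p q, Module R (E p q)]
  (Eh : ∀ p q, E p q →ₗ[R] E (p + 1) q) (Ev : ∀ p q, E p q →ₗ[R] E p (q + 1))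

theorem totd_apply (n p : ℤ) (x : ∀ p, E p (n - p)) :
    totd E Eh Ev n x p =
      castM (R := R) E (by omega) (by omega) (Eh (p - 1) (n - (p - 1)) (x (p - 1))) +
        castM (R := R) E rfl (by omega) (Ev p (n - p) (x p)) :=
  rfl

theorem totd_apply_add_one (n p : ℤ) (x : ∀ p, E p (n - p)) :
    totd E Eh Ev n x (p + 1) =
      castM (R := R) E rfl (by omega) (Eh p (n - p) (x p)) +
        castM (R := R) E rfl (by omega) (Ev (p + 1) (n - (p + 1)) (x (p + 1))) := by
  rw [totd_apply]
  congr 1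
  exact castM_apply_congr (a := (· + 1)) (b := (n - ·)) (fun i => Eh i (n - i) (x i))
    (by omega) _ _ _ _

theorem totd_apply_zero (hEquad : ∀ p q, p < 0 ∨ q < 0 → ∀ x : E p q, x = 0)
    (n : ℤ) (x : ∀ p, E p (n - p)) :
    totd E Eh Ev n x 0 = castM (R := R) E rfl (by omega) (Ev 0 (n - 0) (x 0)) := by
  rw [totd_apply, hEquad (0 - 1) _ (Or.inl (by omega)) (x (0 - 1)), map_zero, map_zero, zero_add]

theorem totd_totd (hEhh : ∀ p q (x : E p q), Eh (p + 1) q (Eh p q x) = 0)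
    (hEvv : ∀ p q (x : E p q), Ev p (q + 1) (Ev p q x) = 0)
    (hEanti : ∀ p q (x : E p q), Eh p (q + 1) (Ev p q x) + Ev (p + 1) q (Eh p q x) = 0)
    (n : ℤ) (x : ∀ p, E p (n - p)) :
    totd E Eh Ev (n + 1) (totd E Eh Ev n x) = 0 := by
  funext p
  rw [totd_apply, totd_apply, totd_apply]
  simp only [map_add, Eh_castM, Ev_castM, castM_castM, hEhh, hEvv, map_zero, zero_add, add_zero]
  rw [← map_add, hEanti, map_zero]
  rfl

theorem exists_sub_totd_apply_eq_zero_of_lt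
    (hexact : ∀ p q (y : E (p + 1) q), Eh (p + 1) q y = 0 → ∃ x : E p q, Eh p q x = y)
    (n m : ℤ) (y : ∀ p, E p (n + 1 - p)) (hy : totd E Eh Ev (n + 1) y (m + 1 + 1) = 0)
    (hym : ∀ p, m + 1 < p → y p = 0) :
    ∃ w : ∀ p, E p (n - p), ∀ p, m < p → (y - totd E Eh Ev n w) p = 0 := by
  have hEh : Eh (m + 1) (n + 1 - (m + 1)) (y (m + 1)) = 0 := by
    rwa [totd_apply_add_one, hym (m + 1 + 1) (by omega), map_zero, map_zero, add_zero,
      castM_eq_zero_iff] at hy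
  obtain ⟨z, hz⟩ := hexact m _ (y (m + 1)) hEh
  let w : ∀ p, E p (n - p) := Pi.single m (castM (R := R) E rfl (by omega) z)
  have hwm : w m = castM (R := R) E rfl (by omega) z := Pi.single_eq_same _ _
  have hw : ∀ p, p ≠ m → w p = 0 := fun p hp => Pi.single_eq_of_ne hp _
  refine ⟨w, fun p hmp => ?_⟩
  rcases (show p = m + 1 ∨ m + 1 < p by omega) with rfl | hp
  · rw [Pi.sub_apply, totd_apply_add_one, hwm, hw _ (by omega), map_zero, map_zero, add_zero,
      Eh_castM, hz, castM_castM, castM_self, sub_self]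
  · rw [Pi.sub_apply, totd_apply, hw _ (by omega), hw _ (by omega), hym p hp]
    simp only [map_zero, add_zero, sub_zero]

theorem exists_sub_totd_apply_eq_zero_of_ne_zero
    (hEhh : ∀ p q (x : E p q), Eh (p + 1) q (Eh p q x) = 0)
    (hEvv : ∀ p q (x : E p q), Ev p (q + 1) (Ev p q x) = 0)
    (hEanti : ∀ p q (x : E p q), Eh p (q + 1) (Ev p q x) + Ev (p + 1) q (Eh p q x) = 0)
    (hEquad : ∀ p q, p < 0 ∨ q < 0 → ∀ x : E p q, x = 0)
    (hexact : ∀ p q (y : E (p + 1) q), Eh (p + 1) q y = 0 → ∃ x : E p q, Eh p q x = y)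
    (n : ℤ) (y : ∀ p, E p (n + 1 - p)) (hy : ∀ p, 0 < p → totd E Eh Ev (n + 1) y p = 0) :
    ∃ w : ∀ p, E p (n - p), ∀ p, p ≠ 0 → (y - totd E Eh Ev n w) p = 0 := by
  suffices H : ∀ m : ℕ, ∀ y : ∀ p, E p (n + 1 - p),
      (∀ p, 0 < p → totd E Eh Ev (n + 1) y p = 0) → (∀ p, (m : ℤ) < p → y p = 0) →
      ∃ w : ∀ p, E p (n - p), ∀ p, p ≠ 0 → (y - totd E Eh Ev n w) p = 0 from
    H (n + 1).toNat y hy fun p hp => hEquad _ _ (Or.inr (by omega)) _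
  intro m
  induction m with
  | zero =>
    intro y _ hy₀
    refine ⟨0, fun p hp => ?_⟩
    rw [map_zero, sub_zero]
    rcases hp.lt_or_gt with hp | hp
    · exact hEquad _ _ (Or.inl hp) _
    · exact hy₀ p hp
  | succ m ih =>
    intro y hy hym
    push_cast at hym
    obtain ⟨w₀, hw₀⟩ :=
      exists_sub_totd_apply_eq_zero_of_lt Eh Ev hexact n m y (hy (m + 1 + 1) (by omega)) hym
    obtain ⟨w, hw⟩ := ih (y - totd E Eh Ev n w₀)
      (fun p hp => by rw [map_sub, totd_totd Eh Ev hEhh hEvv hEanti, sub_zero]; exact hy p hp) hw₀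
    exact ⟨w₀ + w, fun p hp => by rw [map_add, ← sub_sub]; exact hw p hp⟩

end Totalisation

section Augmentation

variable {R : Type} [Ring R] {E : ℤ → ℤ → Type} [∀ p q, AddCommGroup (E p q)]
  [∀ p q, Module R (E p q)]
  {C : ℤ → Type} [∀ q, AddCommGroup (C q)] [∀ q, Module R (C q)]

def augmentationToTot (h : ∀ q, C q →ₗ[R] E 0 q) (n : ℤ) :
    C n →ₗ[R] ∀ p, E p (n - p) :=
  LinearMap.pi fun p =>
    if hp : (0 : ℤ) = p then (castM E hp (by rw [← hp, sub_zero])).comp (h n) else 0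

variable (h : ∀ q, C q →ₗ[R] E 0 q)

theorem augmentationToTot_apply_zero (n : ℤ) (c : C n) :
    augmentationToTot h n c 0 = castM (R := R) E rfl (by omega) (h n c) := by
  simp [augmentationToTot]

theorem augmentationToTot_apply_of_ne_zero (n : ℤ) (c : C n) {p : ℤ} (hp : p ≠ 0) :
    augmentationToTot h n c p = 0 := by
  simp [augmentationToTot, Ne.symm hp]

theorem exists_augmentationToTot_eq (Eh : ∀ p q, E p q →ₗ[R] E (p + 1) q)
    (Ev : ∀ p q, E p q →ₗ[R] E p (q + 1))
    (hexact0 : ∀ q (y : E 0 q), Eh 0 q y = 0 → ∃ x : C q, h q x = y)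
    (n : ℤ) (z : ∀ p, E p (n - p)) (hz : ∀ p, p ≠ 0 → z p = 0)
    (hdz : ∀ p, 0 < p → totd E Eh Ev n z p = 0) :
    ∃ c : C n, augmentationToTot h n c = z := by
  have hEh : Eh 0 n (castM (R := R) E rfl (by omega) (z 0)) = 0 := by
    have hcol := hdz (0 + 1) (by omega)
    rwa [totd_apply_add_one, hz (0 + 1) (by omega), map_zero, map_zero, add_zero,
      castM_eq_zero_iff, ← castM_eq_zero_iff (R := R) (E := E) rfl (by omega : n - 0 = n),
      ← Eh_castM] at hcol
  obtain ⟨c, hc⟩ := hexact0 n _ hEh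
  refine ⟨c, funext fun p => ?_⟩
  rcases eq_or_ne p 0 with rfl | hp
  · rw [augmentationToTot_apply_zero, hc, castM_castM, castM_self]
  · rw [augmentationToTot_apply_of_ne_zero h n c hp, hz p hp]

theorem totd_augmentationToTot_apply_zero (Eh : ∀ p q, E p q →ₗ[R] E (p + 1) q)
    (Ev : ∀ p q, E p q →ₗ[R] E p (q + 1))
    (hEquad : ∀ p q, p < 0 ∨ q < 0 → ∀ x : E p q, x = 0) (n : ℤ) (c : C n) :
    totd E Eh Ev n (augmentationToTot h n c) 0 =
      castM (R := R) E rfl (by omega) (Ev 0 n (h n c)) := by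
  rw [totd_apply_zero Eh Ev hEquad, augmentationToTot_apply_zero, Ev_castM, castM_castM]

theorem dC_eq_or_eq_neg_of_Ev_eq (Ev : ∀ p q, E p q →ₗ[R] E p (q + 1))
    (dC : ∀ q, C q →ₗ[R] C (q + 1)) (hinj : ∀ q (x : C q), h q x = 0 → x = 0) {q : ℤ}
    (hsign : (∀ x : C q, Ev 0 q (h q x) = h (q + 1) (dC q x)) ∨
      (∀ x : C q, Ev 0 q (h q x) = - h (q + 1) (dC q x)))
    {v : C q} {x : C (q + 1)} (hv : Ev 0 q (h q v) = h (q + 1) x) :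
    dC q v = x ∨ dC q v = -x := by
  have h_injective : Function.Injective (h (q + 1)) := fun a b hab =>
    sub_eq_zero.mp (hinj _ _ (by rw [map_sub, hab, sub_self]))
  rcases hsign with hs | hs
  · exact Or.inl (h_injective (by rw [← hs, hv]))
  · exact Or.inr (h_injective (by rw [map_neg, ← neg_eq_iff_eq_neg.mpr (hs v), hv]))

end Augmentation

section QuasiIso

variable {R : Type} [Ring R] {E : ℤ → ℤ → Type} [∀ p q, AddCommGroup (E p q)]
  [∀ p q, Module R (E p q)]
  {C : ℤ → Type} [∀ q, AddCommGroup (C q)] [∀ q, Module R (C q)]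
  (Eh : ∀ p q, E p q →ₗ[R] E (p + 1) q) (Ev : ∀ p q, E p q →ₗ[R] E p (q + 1))
  (dC : ∀ q, C q →ₗ[R] C (q + 1)) (h : ∀ q, C q →ₗ[R] E 0 q)

theorem exists_augmentationToTot_cohomologous
    (hEhh : ∀ p q (x : E p q), Eh (p + 1) q (Eh p q x) = 0)
    (hEvv : ∀ p q (x : E p q), Ev p (q + 1) (Ev p q x) = 0)
    (hEanti : ∀ p q (x : E p q), Eh p (q + 1) (Ev p q x) + Ev (p + 1) q (Eh p q x) = 0)
    (hEquad : ∀ p q, p < 0 ∨ q < 0 → ∀ x : E p q, x = 0)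
    (hinj : ∀ q (x : C q), h q x = 0 → x = 0)
    (hexact0 : ∀ q (y : E 0 q), Eh 0 q y = 0 → ∃ x : C q, h q x = y)
    (hexact : ∀ p q (y : E (p + 1) q), Eh (p + 1) q y = 0 → ∃ x : E p q, Eh p q x = y)
    (hsign : ∀ q, (∀ x : C q, Ev 0 q (h q x) = h (q + 1) (dC q x)) ∨
      (∀ x : C q, Ev 0 q (h q x) = - h (q + 1) (dC q x)))
    (q : ℤ) (y : ∀ p, E p (q + 1 - p)) (hy : totd E Eh Ev (q + 1) y = 0) :
    ∃ x : C (q + 1), dC (q + 1) x = 0 ∧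
      ∃ u : ∀ p, E p (q - p), y - augmentationToTot h (q + 1) x = totd E Eh Ev q u := by
  obtain ⟨u, hu⟩ := exists_sub_totd_apply_eq_zero_of_ne_zero Eh Ev hEhh hEvv hEanti hEquad
    hexact q y fun p _ => by rw [hy]; rfl
  have hcocycle : totd E Eh Ev (q + 1) (y - totd E Eh Ev q u) = 0 := by
    rw [map_sub, hy, totd_totd Eh Ev hEhh hEvv hEanti, sub_zero]
  obtain ⟨x, hx⟩ := exists_augmentationToTot_eq h Eh Ev hexact0 _ _ hu
    fun p _ => by rw [hcocycle]; rfl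
  refine ⟨x, ?_, u, by rw [hx, sub_sub_cancel]⟩
  have hEv : Ev 0 (q + 1) (h (q + 1) x) = h (q + 1 + 1) 0 := by
    have hcol := congrFun hcocycle 0
    rwa [← hx, totd_augmentationToTot_apply_zero h Eh Ev hEquad, Pi.zero_apply,
      castM_eq_zero_iff, ← map_zero (h (q + 1 + 1))] at hcol
  simpa using dC_eq_or_eq_neg_of_Ev_eq h Ev dC hinj (hsign (q + 1)) hEv

theorem exists_dC_eq_of_augmentationToTot_eq_totd
    (hEhh : ∀ p q (x : E p q), Eh (p + 1) q (Eh p q x) = 0)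
    (hEvv : ∀ p q (x : E p q), Ev p (q + 1) (Ev p q x) = 0)
    (hEanti : ∀ p q (x : E p q), Eh p (q + 1) (Ev p q x) + Ev (p + 1) q (Eh p q x) = 0)
    (hEquad : ∀ p q, p < 0 ∨ q < 0 → ∀ x : E p q, x = 0)
    (hinj : ∀ q (x : C q), h q x = 0 → x = 0)
    (hexact0 : ∀ q (y : E 0 q), Eh 0 q y = 0 → ∃ x : C q, h q x = y)
    (hexact : ∀ p q (y : E (p + 1) q), Eh (p + 1) q y = 0 → ∃ x : E p q, Eh p q x = y)
    (hsign : ∀ q, (∀ x : C q, Ev 0 q (h q x) = h (q + 1) (dC q x)) ∨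
      (∀ x : C q, Ev 0 q (h q x) = - h (q + 1) (dC q x)))
    (q : ℤ) (x : C (q + 1)) (u : ∀ p, E p (q - p))
    (hu : augmentationToTot h (q + 1) x = totd E Eh Ev q u) :
    ∃ v : C q, dC q v = x := by
  obtain ⟨n, rfl⟩ : ∃ n, q = n + 1 := ⟨q - 1, by ring⟩
  obtain ⟨w, hw⟩ := exists_sub_totd_apply_eq_zero_of_ne_zero Eh Ev hEhh hEvv hEanti hEquad
    hexact n u fun p hp => by rw [← hu, augmentationToTot_apply_of_ne_zero h _ _ hp.ne']
  have hd : totd E Eh Ev (n + 1) (u - totd E Eh Ev n w) = augmentationToTot h (n + 1 + 1) x := by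
    rw [map_sub, totd_totd Eh Ev hEhh hEvv hEanti, sub_zero, hu]
  obtain ⟨v, hv⟩ := exists_augmentationToTot_eq h Eh Ev hexact0 _ _ hw
    fun p hp => by rw [hd, augmentationToTot_apply_of_ne_zero h _ _ hp.ne']
  have hEv : Ev 0 (n + 1) (h (n + 1) v) = h (n + 1 + 1) x := by
    have hcol := congrFun hd 0
    rw [← hv, totd_augmentationToTot_apply_zero h Eh Ev hEquad,
      augmentationToTot_apply_zero] at hcol
    exact castM_injective _ _ hcol
  rcases dC_eq_or_eq_neg_of_Ev_eq h Ev dC hinj (hsign (n + 1)) hEv with hv | hv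
  · exact ⟨v, hv⟩
  · exact ⟨-v, by rw [map_neg, hv, neg_neg]⟩

end QuasiIso

theorem augmented_firstQuadrant_tot_quasiIso (R : Type) [Ring R]
    (E : ℤ → ℤ → Type)
    [∀ p q, AddCommGroup (E p q)] [∀ p q, Module R (E p q)]
    (Eh : ∀ p q, E p q →ₗ[R] E (p + 1) q) (Ev : ∀ p q, E p q →ₗ[R] E p (q + 1))
    (hEhh : ∀ p q (x : E p q), Eh (p + 1) q (Eh p q x) = 0)
    (hEvv : ∀ p q (x : E p q), Ev p (q + 1) (Ev p q x) = 0)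
    (hEanti : ∀ p q (x : E p q), Eh p (q + 1) (Ev p q x) + Ev (p + 1) q (Eh p q x) = 0)
    (hEquad : ∀ p q, p < 0 ∨ q < 0 → ∀ x : E p q, x = 0)
    (C : ℤ → Type) [∀ q, AddCommGroup (C q)] [∀ q, Module R (C q)]
    (dC : ∀ q, C q →ₗ[R] C (q + 1))
    (h : ∀ q, C q →ₗ[R] E 0 q)
    -- exactness of the augmented rows:
    (hinj : ∀ q (x : C q), h q x = 0 → x = 0)
    (hexact0 : ∀ q (y : E 0 q), Eh 0 q y = 0 → ∃ x : C q, h q x = y)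
    (hexact : ∀ p q (y : E (p + 1) q), Eh (p + 1) q y = 0 → ∃ x : E p q, Eh p q x = y)
    -- the two composites agree up to sign (for each `q`):
    (hsign : ∀ q, (∀ x : C q, Ev 0 q (h q x) = h (q + 1) (dC q x)) ∨
                  (∀ x : C q, Ev 0 q (h q x) = - h (q + 1) (dC q x))) :
    IsQuasiIso R C (fun n => ∀ p, E p (n - p)) dC (totd E Eh Ev)
      (fun n => LinearMap.pi fun p =>
        if hp : (0 : ℤ) = p then
          (castM E hp (by omega : n = n - p)).comp (h n)
        else 0) :=
  ⟨exists_augmentationToTot_cohomologous Eh Ev dC h hEhh hEvv hEanti hEquad hinj hexact0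
      hexact hsign,
    fun q x _ ⟨u, hu⟩ => exists_dC_eq_of_augmentationToTot_eq_totd Eh Ev dC h hEhh hEvv
      hEanti hEquad hinj hexact0 hexact hsign q x u hu⟩
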